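/- arXiv:1408.5112 — 3 statements merged into one kernel-verified Lean document; each statement's English description precedes it below -/
import Mathlib

section
/- Let R be a ring, D a derivation of R, and N = N(R) the upper nilradical of R. Suppose a ∈ J(R[x;D]) ∩ R is such that a + N is central in the quotient ring R/N. Then a ∈ N; in particular a is nilpotent. -/
/-- Let `R` be a ring, `D` a derivation of `R`, and `N` the upper
nilradical of `R` (a nil two-sided ideal containing every nil two-sided ideal of `R`).
In the differential polynomial ring `A = R[x;D]` (axiomatized by the ring embedding
`ι : R →+* A`, the element `X`, the commutation rule `X * ι a = ι a * X + ι (D a)`, and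
the fact that every element of `A` is uniquely of the form `Σ_i X^i * ι aᵢ`), if
`a ∈ J(R[x;D]) ∩ R` is central modulo `N`, then `a ∈ N`; in particular `a` is nilpotent. -/
theorem mem_upperNilradical_of_central_mod_of_mem_jacobson
    {R A : Type*} [Ring R] [Ring A]
    (D : R → R)
    (hD_add : ∀ a b : R, D (a + b) = D a + D b)
    (hD_mul : ∀ a b : R, D (a * b) = D a * b + a * D b)
    (N : TwoSidedIdeal R)
    (hN_nil : ∀ x ∈ N, IsNilpotent x)
    (hN_max : ∀ I : TwoSidedIdeal R, (∀ x ∈ I, IsNilpotent x) → I ≤ N)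
    (ι : R →+* A) (X : A)
    (hcomm : ∀ a : R, X * ι a = ι a * X + ι (D a))
    (hspan : ∀ f : A, ∃ c : ℕ →₀ R, f = c.sum fun i a => X ^ i * ι a)
    (hfree : ∀ c : ℕ →₀ R, (c.sum fun i a => X ^ i * ι a) = 0 → c = 0)
    (a : R)
    (haJ : ι a ∈ (⊥ : Ideal A).jacobson)
    (hcentral : ∀ r : R, a * r - r * a ∈ N) :
    a ∈ N ∧ IsNilpotent a := by
  classical
  -- Step 1: every element of the Jacobson radical is left quasi-regular.
  have key : ∀ z : A, z ∈ (⊥ : Ideal A).jacobson → ∃ v : A, v * (1 - z) = 1 := by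
    intro z hz
    obtain ⟨w, hw⟩ := Ideal.mem_jacobson_iff.1 hz (-1)
    rw [Ideal.mem_bot] at hw
    refine ⟨w, ?_⟩
    have h2 : w * (1 - z) - 1 = w * (-1) * z + w - 1 := by noncomm_ring
    rw [← sub_eq_zero, h2, hw]
  -- Step 2: a genuine right inverse for `1 - X * ι a`.
  have htJ : X * ι a ∈ (⊥ : Ideal A).jacobson := Ideal.mul_mem_left _ X haJ
  obtain ⟨u, hu⟩ := key _ htJ
  have hu' : u = 1 + u * (X * ι a) := by rw [← hu]; noncomm_ring
  have hvtJ : -(u * (X * ι a)) ∈ (⊥ : Ideal A).jacobson :=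
    neg_mem (Ideal.mul_mem_left _ u htJ)
  obtain ⟨w0, hw0⟩ := key _ hvtJ
  have hwv : w0 * u = 1 := by
    rw [sub_neg_eq_add, ← hu'] at hw0; exact hw0
  have h1 : (1 - X * ι a) * u = 1 := by
    have hweq : w0 = 1 - X * ι a := by
      calc w0 = w0 * (u * (1 - X * ι a)) := by rw [hu, mul_one]
        _ = (w0 * u) * (1 - X * ι a) := by rw [mul_assoc]
        _ = 1 - X * ι a := by rw [hwv, one_mul]
    rw [← hweq]; exact hwv
  -- Step 3: coefficients.
  obtain ⟨c, hcu⟩ := hspan u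
  obtain ⟨b, hbu⟩ := hspan (ι a * u)
  set n : ℕ := max (c.support.sup id) (b.support.sup id) with hn
  have hcsupp : ∀ i, n < i → c i = 0 := by
    intro i hi
    by_contra h
    have h1' : i ∈ c.support := Finsupp.mem_support_iff.2 h
    have h2' : i ≤ n := le_trans (Finset.le_sup (f := id) h1') (le_max_left _ _)
    omega
  have hcsub : ∀ m : ℕ, n < m → c.support ⊆ Finset.range m := by
    intro m hm i hi
    have : i ≤ n := le_trans (Finset.le_sup (f := id) hi) (le_max_left _ _)
    exact Finset.mem_range.2 (by omega)
  have hbsub : b.support ⊆ Finset.range (n + 1) := by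
    intro i hi
    have : i ≤ n := le_trans (Finset.le_sup (f := id) hi) (le_max_right _ _)
    exact Finset.mem_range.2 (by omega)
  have hsum_c : ∀ m : ℕ, n < m → u = ∑ i ∈ Finset.range m, X ^ i * ι (c i) := by
    intro m hm
    rw [hcu]
    exact Finsupp.sum_of_support_subset c (hcsub m hm) _ (fun i _ => by simp)
  have hsum_b : ι a * u = ∑ i ∈ Finset.range (n + 1), X ^ i * ι (b i) := by
    rw [hbu]
    exact Finsupp.sum_of_support_subset b hbsub _ (fun i _ => by simp)
  -- Step 4: uniqueness of coefficients.
  have huniq : ∀ (k : ℕ) (f g : ℕ → R),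
      (∑ i ∈ Finset.range k, X ^ i * ι (f i)) = (∑ i ∈ Finset.range k, X ^ i * ι (g i)) →
      ∀ i, i < k → f i = g i := by
    intro k f g hfg i hik
    set c0 : ℕ →₀ R := ∑ j ∈ Finset.range k, Finsupp.single j (f j - g j) with hc0
    have hs : (c0.sum fun i r => X ^ i * ι r) = 0 := by
      rw [hc0, ← Finsupp.sum_finset_sum_index (fun j => by simp)
        (fun j r s => by rw [map_add, mul_add])]
      rw [Finset.sum_congr rfl (fun j _ => Finsupp.sum_single_index (by simp))]
      simp only [map_sub, mul_sub]
      rw [Finset.sum_sub_distrib, hfg, sub_self]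
    have hz := hfree c0 hs
    have happ : c0 i = f i - g i := by
      rw [hc0, Finsupp.finset_sum_apply]
      rw [Finset.sum_congr rfl (fun j _ => Finsupp.single_apply)]
      rw [Finset.sum_ite_eq' (Finset.range k) i (fun j => f j - g j)]
      simp [Finset.mem_range.2 hik]
    rw [hz] at happ
    simp only [Finsupp.coe_zero, Pi.zero_apply] at happ
    have := happ.symm
    rwa [sub_eq_zero] at this
  -- Step 5: commutation of `ι r` past powers of `X`.
  have hXcomm : ∀ r : R, ι r * X = X * ι r - ι (D r) := by
    intro r
    rw [eq_sub_iff_add_eq]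
    exact (hcomm r).symm
  have hA : ∀ (i : ℕ) (r : R), ∃ w : ℕ → R, w i = r ∧ (∀ j, i < j → w j = 0) ∧
      ι r * X ^ i = ∑ j ∈ Finset.range (i + 1), X ^ j * ι (w j) := by
    intro i
    induction i with
    | zero =>
      intro r
      refine ⟨fun j => if j = 0 then r else 0, by simp, fun j hj => if_neg (by omega), by simp⟩
    | succ i ih =>
      intro r
      obtain ⟨w, hwi, hwz, hw⟩ := ih r
      obtain ⟨w', hwi', hwz', hw'⟩ := ih (D r)
      refine ⟨fun j => (if j = 0 then 0 else w (j - 1)) - w' j, ?_, ?_, ?_⟩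
      · simp [hwi, hwz' (i + 1) (by omega)]
      · intro j hj
        have hj0 : j ≠ 0 := by omega
        simp [hj0, hwz (j - 1) (by omega), hwz' j (by omega)]
      · have l1 : ι r * X ^ (i + 1)
            = X * (∑ j ∈ Finset.range (i + 1), X ^ j * ι (w j))
              - ∑ j ∈ Finset.range (i + 1), X ^ j * ι (w' j) := by
          rw [pow_succ', ← mul_assoc, hXcomm r, sub_mul, mul_assoc, hw, hw']
        have e2 : ∑ j ∈ Finset.range (i + 1 + 1), X ^ j * ι (if j = 0 then 0 else w (j - 1))
            = X * ∑ j ∈ Finset.range (i + 1), X ^ j * ι (w j) := by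
          rw [Finset.sum_range_succ' (fun j => X ^ j * ι (if j = 0 then 0 else w (j - 1))) (i + 1)]
          simp only [Nat.succ_ne_zero, if_false, Nat.add_sub_cancel, if_true, reduceIte,
            pow_zero, map_zero, mul_zero, add_zero, one_mul]
          rw [Finset.mul_sum]
          refine Finset.sum_congr rfl fun j _ => ?_
          rw [pow_succ', mul_assoc]
        have e3 : ∑ j ∈ Finset.range (i + 1 + 1), X ^ j * ι (w' j)
            = ∑ j ∈ Finset.range (i + 1), X ^ j * ι (w' j) := by
          rw [Finset.sum_range_succ, hwz' (i + 1) (by omega)]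
          simp
        calc ι r * X ^ (i + 1)
            = X * (∑ j ∈ Finset.range (i + 1), X ^ j * ι (w j))
              - ∑ j ∈ Finset.range (i + 1), X ^ j * ι (w' j) := l1
          _ = ∑ j ∈ Finset.range (i + 1 + 1), X ^ j * ι (if j = 0 then 0 else w (j - 1))
              - ∑ j ∈ Finset.range (i + 1 + 1), X ^ j * ι (w' j) := by rw [e2, e3]
          _ = ∑ j ∈ Finset.range (i + 1 + 1),
              X ^ j * ι ((if j = 0 then 0 else w (j - 1)) - w' j) := by
            simp only [map_sub, mul_sub]
            rw [Finset.sum_sub_distrib]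
  choose w hw1 hw2 hw3 using fun i => hA i a
  -- Step 6: coefficients of `ι a * u` in terms of those of `u`.
  have hbe : ∀ j, j ≤ n → b j = ∑ i ∈ Finset.Icc j n, w i j * c i := by
    have hexp : ι a * u
        = ∑ j ∈ Finset.range (n + 1), X ^ j * ι (∑ i ∈ Finset.Icc j n, w i j * c i) := by
      rw [hsum_c (n + 1) (by omega), Finset.mul_sum]
      calc ∑ i ∈ Finset.range (n + 1), ι a * (X ^ i * ι (c i))
          = ∑ i ∈ Finset.range (n + 1), ∑ j ∈ Finset.range (i + 1),
              X ^ j * ι (w i j * c i) := by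
            refine Finset.sum_congr rfl fun i _ => ?_
            rw [← mul_assoc, hw3 i, Finset.sum_mul]
            refine Finset.sum_congr rfl fun j _ => ?_
            rw [mul_assoc, ← map_mul]
        _ = ∑ j ∈ Finset.range (n + 1), ∑ i ∈ Finset.Icc j n, X ^ j * ι (w i j * c i) := by
            refine Finset.sum_comm' ?_
            intro i j
            simp only [Finset.mem_range, Finset.mem_Icc]
            omega
        _ = ∑ j ∈ Finset.range (n + 1), X ^ j * ι (∑ i ∈ Finset.Icc j n, w i j * c i) := by
            refine Finset.sum_congr rfl fun j _ => ?_
            rw [map_sum, Finset.mul_sum]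
    intro j hj
    exact huniq (n + 1) (fun j => b j) (fun j => ∑ i ∈ Finset.Icc j n, w i j * c i)
      (by rw [← hsum_b, hexp]) j (by omega)
  -- Step 7: recurrences for the coefficients `c`.
  have hu1 : u = 1 + X * (ι a * u) := by
    rw [← h1]; noncomm_ring
  set dd : ℕ → R := fun i => if i = 0 then (1 : R) else b (i - 1) with hdd
  have hgoal : ∑ i ∈ Finset.range (n + 2), X ^ i * ι (c i)
      = ∑ i ∈ Finset.range (n + 2), X ^ i * ι (dd i) := by
    rw [← hsum_c (n + 2) (by omega)]
    rw [Finset.sum_range_succ' (fun i => X ^ i * ι (dd i)) (n + 1)]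
    have hdd0 : dd 0 = 1 := by simp [hdd]
    have hdds : ∀ i : ℕ, dd (i + 1) = b i := fun i => by simp [hdd]
    simp only [hdds, hdd0, pow_zero, one_mul, map_one]
    rw [hu1, hsum_b, Finset.mul_sum, add_comm]
    congr 1
    refine Finset.sum_congr rfl fun i _ => ?_
    rw [pow_succ', mul_assoc]
  have hc0 : c 0 = 1 := by
    have := huniq (n + 2) (fun i => c i) dd hgoal 0 (by omega)
    simpa [hdd] using this
  have hcs : ∀ i, i ≤ n → c (i + 1) = b i := by
    intro i hi
    have := huniq (n + 2) (fun i => c i) dd hgoal (i + 1) (by omega)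
    simpa [hdd] using this
  -- Step 8: the main induction, `c i * a ^ k ∈ N` whenever `n + 1 ≤ i + k`.
  have main : ∀ k i : ℕ, n + 1 ≤ i + k → c i * a ^ k ∈ N := by
    intro k
    induction k with
    | zero =>
      intro i hi
      rw [pow_zero, mul_one, hcsupp i (by omega)]
      exact N.zero_mem
    | succ k IH =>
      intro i hi
      by_cases hcase : n + 1 ≤ i + k
      · rw [pow_succ, ← mul_assoc]
        exact N.mul_mem_right _ _ (IH i hcase)
      · have hik : i + k = n := by omega
        have hrel : c (i + 1) = ∑ i' ∈ Finset.Icc i n, w i' i * c i' := by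
          rw [hcs i (by omega), hbe i (by omega)]
        have hmem : i ∈ Finset.Icc i n := Finset.mem_Icc.2 ⟨le_refl i, by omega⟩
        have hsplit : a * c i
            = c (i + 1) - ∑ i' ∈ (Finset.Icc i n).erase i, w i' i * c i' := by
          rw [hrel, ← Finset.add_sum_erase _ _ hmem, hw1 i, add_sub_cancel_right]
        have h2 : a * c i * a ^ k ∈ N := by
          rw [hsplit, sub_mul]
          refine N.sub_mem ?_ ?_
          · exact IH (i + 1) (by omega)
          · rw [Finset.sum_mul]
            refine N.finsetSum_mem _ _ fun i' hi' => ?_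
            have hmem' := Finset.mem_erase.1 hi'
            have hIcc := Finset.mem_Icc.1 hmem'.2
            rw [mul_assoc]
            exact N.mul_mem_left _ _ (IH i' (by omega))
        have h3 : (a * c i - c i * a) * a ^ k ∈ N := N.mul_mem_right _ _ (hcentral (c i))
        have hp : (a : R) ^ (k + 1) = a * a ^ k := pow_succ' a k
        have heq : (c i : R) * (a * a ^ k) = a * c i * a ^ k - (a * c i - c i * a) * a ^ k := by
          noncomm_ring
        rw [hp, heq]
        exact N.sub_mem h2 h3
  have hfin : a ^ (n + 1) ∈ N := by
    have := main (n + 1) 0 (by omega)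
    rwa [hc0, one_mul] at this
  -- Step 9: from `a ^ (n+1) ∈ N` and centrality, conclude `a ∈ N`.
  have hpowc : ∀ (m : ℕ) (r : R), a ^ m * r - r * a ^ m ∈ N := by
    intro m
    induction m with
    | zero => intro r; simpa using N.zero_mem
    | succ m IH =>
      intro r
      have heq : a ^ (m + 1) * r - r * a ^ (m + 1)
          = a ^ m * (a * r - r * a) + (a ^ m * r - r * a ^ m) * a := by
        rw [pow_succ]; noncomm_ring
      rw [heq]
      exact N.add_mem (N.mul_mem_left _ _ (hcentral r)) (N.mul_mem_right _ _ (IH r))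
  have hcongpow : ∀ x y : R, x - y ∈ N → ∀ m : ℕ, x ^ m - y ^ m ∈ N := by
    intro x y hxy m
    induction m with
    | zero => simpa using N.zero_mem
    | succ m IH =>
      have heq : x ^ (m + 1) - y ^ (m + 1)
          = x ^ m * (x - y) + (x ^ m - y ^ m) * y := by noncomm_ring
      rw [heq]
      exact N.add_mem (N.mul_mem_left _ _ hxy) (N.mul_mem_right _ _ IH)
  have hsa : ∀ (s : R) (m : ℕ), (s * a) ^ (m + 1) - s ^ (m + 1) * a ^ (m + 1) ∈ N := by
    intro s m
    induction m with
    | zero => simpa using N.zero_mem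
    | succ m IH =>
      have heq : (s * a) ^ (m + 2) - s ^ (m + 2) * a ^ (m + 2)
          = ((s * a) ^ (m + 1) - s ^ (m + 1) * a ^ (m + 1)) * (s * a)
            + s ^ (m + 1) * ((a ^ (m + 1) * s - s * a ^ (m + 1)) * a) := by noncomm_ring
      rw [heq]
      exact N.add_mem (N.mul_mem_right _ _ IH)
        (N.mul_mem_left _ _ (N.mul_mem_right _ _ (hpowc (m + 1) s)))
  -- the two-sided ideal of elements congruent mod `N` to a multiple of `a`
  set T : TwoSidedIdeal R := TwoSidedIdeal.mk' {x | ∃ s : R, x - s * a ∈ N}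
    ⟨0, by simpa using N.zero_mem⟩
    (by
      rintro x y ⟨s, hs⟩ ⟨s', hs'⟩
      refine ⟨s + s', ?_⟩
      have := N.add_mem hs hs'
      convert this using 1
      noncomm_ring)
    (by
      rintro x ⟨s, hs⟩
      refine ⟨-s, ?_⟩
      have := N.neg_mem hs
      convert this using 1
      noncomm_ring)
    (by
      rintro x y ⟨s, hs⟩
      refine ⟨x * s, ?_⟩
      have := N.mul_mem_left x _ hs
      convert this using 1
      noncomm_ring)
    (by
      rintro x y ⟨s, hs⟩
      refine ⟨s * y, ?_⟩
      have := N.add_mem (N.mul_mem_right _ y hs) (N.mul_mem_left s _ (hcentral y))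
      convert this using 1
      noncomm_ring) with hT
  have hmemT : ∀ x : R, x ∈ T ↔ ∃ s : R, x - s * a ∈ N := by
    intro x
    rw [hT]
    exact TwoSidedIdeal.mem_mk' _ _ _ _ _ _ x
  have hTnil : ∀ x ∈ T, IsNilpotent x := by
    intro x hx
    obtain ⟨s, hs⟩ := (hmemT x).1 hx
    have hx1 : x ^ (n + 1) - (s * a) ^ (n + 1) ∈ N := hcongpow x (s * a) hs (n + 1)
    have hx2 := hsa s n
    have hx3 : s ^ (n + 1) * a ^ (n + 1) ∈ N := N.mul_mem_left _ _ hfin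
    have hx4 : x ^ (n + 1) ∈ N := by
      have := N.add_mem (N.add_mem hx1 hx2) hx3
      convert this using 1
      abel
    obtain ⟨k, hk⟩ := hN_nil _ hx4
    exact ⟨(n + 1) * k, by rw [pow_mul]; exact hk⟩
  have haT : a ∈ T := (hmemT a).2 ⟨1, by simpa using N.zero_mem⟩
  have haN : a ∈ N := hN_max T hTnil haT
  exact ⟨haN, hN_nil a haN⟩
end

section
/- Let R be a ring, D a derivation of R, and let a ∈ R. Suppose f = Σ_{i=0}^{n} xⁱbᵢ ∈ R[x;D] satisfies the two quasi-regularity equations f + x·a − f·(x·a) = 0 and f + x·a − (x·a)·f = 0 in R[x;D]. Then b₀ = 0, bₙ·a = 0, bᵢ − b_{i−1}·a + D(bᵢ)·a = 0 for i = 2,…,n, and b₁ + a + D(b₁)·a = 0. -/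
/-!
Write elements of `R[x;D]` in the form `Σ xⁱ cᵢ`. The rule `b x = x b - D(b)` gives
`(Σ xⁱ bᵢ) · x a = Σ (x^{i+1} bᵢ a - xⁱ D(bᵢ) a)`, so comparing the coefficients of `x^{k+1}` in
`f + x a - f · x a = 0` yields the equations for `i ≥ 1` (with `i = n + 1` giving `bₙ a = 0`).
On the other side `x a · f = x · (a f)` has no constant term, so the constant coefficient of
`f + x a - x a · f = 0` is `b₀ = 0`.
-/

namespace DifferentialPolynomial

open Finsupp

variable {R A : Type*} [Ring R] [Ring A] (ι : R →+* A) (X : A)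

noncomputable def ofCoeff : (ℕ →₀ R) →+ A :=
  liftAddHom fun i => (AddMonoidHom.mulLeft (X ^ i)).comp ι.toAddMonoidHom

theorem ofCoeff_apply (c : ℕ →₀ R) : ofCoeff ι X c = c.sum fun i r => X ^ i * ι r := rfl

@[simp]
theorem ofCoeff_single (i : ℕ) (r : R) : ofCoeff ι X (single i r) = X ^ i * ι r := by
  simp [ofCoeff]

theorem X_mul_ofCoeff (c : ℕ →₀ R) :
    X * ofCoeff ι X c = ofCoeff ι X (c.mapDomain Nat.succ) := by
  induction c using Finsupp.induction_linear with
  | zero => simp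
  | add c d hc hd => simp [mul_add, hc, hd, mapDomain_add]
  | single i r => simp [mapDomain_single, pow_succ', mul_assoc]

variable {ι X}

theorem coeff_zero_of_add_X_mul_sub_X_mul_mul_eq_zero
    (hinj : Function.Injective (ofCoeff ι X)) (hsurj : Function.Surjective (ofCoeff ι X))
    {a : R} {c : ℕ →₀ R} (h : ofCoeff ι X c + X * ι a - X * ι a * ofCoeff ι X c = 0) :
    c 0 = 0 := by
  obtain ⟨d, hd⟩ := hsurj (ι a * ofCoeff ι X c)
  have hX : X * ι a = ofCoeff ι X (single 1 a) := by simp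
  rw [mul_assoc, ← hd, X_mul_ofCoeff, hX, ← map_add, ← map_sub, ← map_zero (ofCoeff ι X)] at h
  have := DFunLike.congr_fun (hinj h) 0
  simpa [mapDomain_of_notMem_range d 0 (f := Nat.succ) (by simp)] using this

variable {D : R →+ R} (hcomm : ∀ r : R, X * ι r = ι r * X + ι (D r))
include hcomm

theorem ofCoeff_mul_X_mul (a : R) (c : ℕ →₀ R) :
    ofCoeff ι X c * (X * ι a) = ofCoeff ι X
      ((c.mapRange (· * a) (zero_mul a)).mapDomain Nat.succ
        - c.mapRange (D · * a) (by simp)) := by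
  induction c using Finsupp.induction_linear with
  | zero => simp
  | add c d hc hd =>
    rw [map_add, add_mul, hc, hd, ← map_add, mapRange_add (add_mul · · a),
      mapRange_add (fun r s => by rw [map_add, add_mul]), mapDomain_add]
    congr 1
    abel
  | single i r =>
    have hswap : ι r * X = X * ι r - ι (D r) := eq_sub_of_add_eq (hcomm r).symm
    simp only [mapRange_single, mapDomain_single, map_sub, ofCoeff_single, map_mul, pow_succ]
    calc X ^ i * ι r * (X * ι a) = X ^ i * (ι r * X) * ι a := by noncomm_ring
      _ = _ := by rw [hswap]; noncomm_ring

theorem coeff_succ_of_add_X_mul_sub_mul_X_mul_eq_zero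
    (hinj : Function.Injective (ofCoeff ι X)) {a : R} {c : ℕ →₀ R}
    (h : ofCoeff ι X c + X * ι a - ofCoeff ι X c * (X * ι a) = 0) (k : ℕ) :
    c (k + 1) + (if k = 0 then a else 0) - c k * a + D (c (k + 1)) * a = 0 := by
  have hX : X * ι a = ofCoeff ι X (single 1 a) := by simp
  rw [ofCoeff_mul_X_mul hcomm, hX, ← map_add, ← map_sub, ← map_zero (ofCoeff ι X)] at h
  have := DFunLike.congr_fun (hinj h) (k + 1)
  simpa [mapDomain_apply Nat.succ_injective, single_apply, eq_comm, sub_add] using this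

end DifferentialPolynomial

open DifferentialPolynomial in
theorem coefficient_equations_of_quasiRegular_general
    {R A : Type*} [Ring R] [Ring A]
    (D : R → R)
    (hD_add : ∀ a b : R, D (a + b) = D a + D b)
    (ι : R →+* A) (X : A)
    (hcomm : ∀ a : R, X * ι a = ι a * X + ι (D a))
    (hspan : ∀ f : A, ∃ c : ℕ →₀ R, f = c.sum fun i a => X ^ i * ι a)
    (hfree : ∀ c : ℕ →₀ R, (c.sum fun i a => X ^ i * ι a) = 0 → c = 0)
    (a : R) (n : ℕ) (b : ℕ → R)
    (hb_top : ∀ i : ℕ, n < i → b i = 0)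
    (f : A)
    (hf : f = ∑ i ∈ Finset.range (n + 1), X ^ i * ι (b i))
    (hqr₁ : f + X * ι a - f * (X * ι a) = 0)
    (hqr₂ : f + X * ι a - (X * ι a) * f = 0) :
    b 0 = 0 ∧
    b n * a = 0 ∧
    (∀ i : ℕ, 2 ≤ i → i ≤ n → b i - b (i - 1) * a + D (b i) * a = 0) ∧
    b 1 + a + D (b 1) * a = 0 := by
  have hinj : Function.Injective (ofCoeff ι X) := (injective_iff_map_eq_zero _).2 hfree
  have hsurj : Function.Surjective (ofCoeff ι X) := fun g => (hspan g).imp fun _ h => h.symm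
  let p : ℕ →₀ R := Finsupp.onFinset (Finset.range (n + 1)) b fun i hi =>
    Finset.mem_range.2 (Nat.lt_succ_of_le (not_lt.1 (mt (hb_top i) hi)))
  have hfp : f = ofCoeff ι X p := by
    rw [hf, ofCoeff_apply, Finsupp.onFinset_sum _ fun _ => by simp]
  have hb0 : b 0 = 0 := coeff_zero_of_add_X_mul_sub_X_mul_mul_eq_zero hinj hsurj (hfp ▸ hqr₂)
  have hsucc (k : ℕ) : b (k + 1) + (if k = 0 then a else 0) - b k * a + D (b (k + 1)) * a = 0 :=
    coeff_succ_of_add_X_mul_sub_mul_X_mul_eq_zero (D := AddMonoidHom.mk' D hD_add) hcomm hinj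
      (hfp ▸ hqr₁) k
  refine ⟨hb0, ?_, fun i hi _ => ?_, by simpa [hb0] using hsucc 0⟩
  · obtain _ | m := n
    · simp [hb0]
    · have hD0 : D 0 = 0 := (AddMonoidHom.mk' D hD_add).map_zero
      simpa [hb_top (m + 2) (by omega), hD0] using hsucc (m + 1)
  · obtain ⟨k, rfl⟩ : ∃ k, i = k + 1 + 1 := ⟨i - 2, by omega⟩
    simpa using hsucc (k + 1)

/-- Let `R` be a ring and `D` a derivation of `R`.  In the differential
polynomial ring `A = R[x;D]` (axiomatized by the ring embedding `ι : R →+* A`, the element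
`X`, the commutation rule `X * ι a = ι a * X + ι (D a)`, and the fact that every element of
`A` is uniquely of the form `Σ_i X^i * ι aᵢ`), suppose `f = Σ_{i=0}^{n} xⁱ bᵢ` (so `bᵢ = 0`
for `i > n`) satisfies the quasi-regularity equations `f + x·a − f·(x·a) = 0` and
`f + x·a − (x·a)·f = 0`.  Then `b₀ = 0`, `bₙ·a = 0`,
`bᵢ − b_{i−1}·a + D(bᵢ)·a = 0` for `i = 2,…,n`, and `b₁ + a + D(b₁)·a = 0`. -/
theorem coefficient_equations_of_quasiRegular
    {R A : Type*} [Ring R] [Ring A]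
    (D : R → R)
    (hD_add : ∀ a b : R, D (a + b) = D a + D b)
    (hD_mul : ∀ a b : R, D (a * b) = D a * b + a * D b)
    (ι : R →+* A) (X : A)
    (hcomm : ∀ a : R, X * ι a = ι a * X + ι (D a))
    (hspan : ∀ f : A, ∃ c : ℕ →₀ R, f = c.sum fun i a => X ^ i * ι a)
    (hfree : ∀ c : ℕ →₀ R, (c.sum fun i a => X ^ i * ι a) = 0 → c = 0)
    (a : R) (n : ℕ) (b : ℕ → R)
    (hb_top : ∀ i : ℕ, n < i → b i = 0)
    (f : A)
    (hf : f = ∑ i ∈ Finset.range (n + 1), X ^ i * ι (b i))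
    (hqr₁ : f + X * ι a - f * (X * ι a) = 0)
    (hqr₂ : f + X * ι a - (X * ι a) * f = 0) :
    b 0 = 0 ∧
    b n * a = 0 ∧
    (∀ i : ℕ, 2 ≤ i → i ≤ n → b i - b (i - 1) * a + D (b i) * a = 0) ∧
    b 1 + a + D (b 1) * a = 0 :=
  coefficient_equations_of_quasiRegular_general D hD_add ι X hcomm hspan hfree a n b hb_top f hf
    hqr₁ hqr₂
end

section
/- Let R be a ring, D a derivation of R, and N = N(R) the upper nilradical of R. Let a ∈ R be such that a + N is central in R/N, and suppose f = Σ_{i=1}^{n} xⁱbᵢ ∈ R[x;D] (with b₁,…,bₙ ∈ R) satisfies f + x·a − f·(x·a) = 0 and f + x·a − (x·a)·f = 0 in R[x;D]. Then b_{n−j+1}·aʲ ∈ N for every j = 1,…,n, and moreover a^{n+1} ∈ N. -/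
namespace Statement10Aux

variable {R A : Type*} [Ring R] [Ring A]

/-- Coefficients `e D i k r` such that `ι r * X ^ i = ∑ k ≤ i, X ^ k * ι (e D i k r)`. -/
def e (D : R → R) : ℕ → ℕ → R → R
  | 0, 0, r => r
  | 0, _+1, _ => 0
  | i+1, 0, r => - D (e D i 0 r)
  | i+1, k+1, r => e D i k r - D (e D i (k+1) r)

lemma e_of_gt (D : R → R) (hD0 : D 0 = 0) : ∀ i k (r : R), i < k → e D i k r = 0
  | 0, k+1, r, _ => rfl
  | i+1, k+1, r, h => by
    show e D i k r - D (e D i (k+1) r) = 0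
    rw [e_of_gt D hD0 i k r (by omega), e_of_gt D hD0 i (k+1) r (by omega), hD0, sub_zero]

lemma e_top (D : R → R) (hD0 : D 0 = 0) : ∀ i (r : R), e D i i r = r
  | 0, r => rfl
  | i+1, r => by
    show e D i i r - D (e D i (i+1) r) = r
    rw [e_of_gt D hD0 i (i+1) r (by omega), hD0, sub_zero, e_top D hD0 i r]

lemma mulXpow (D : R → R) (hD0 : D 0 = 0) (ι : R →+* A) (X : A)
    (hcomm : ∀ a : R, X * ι a = ι a * X + ι (D a)) :
    ∀ (i : ℕ) (r : R), ι r * X ^ i = ∑ k ∈ Finset.range (i+1), X ^ k * ι (e D i k r)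
  | 0, r => by simp [e]
  | i+1, r => by
    have hswap : ∀ s : R, ι s * X = X * ι s - ι (D s) := fun s => by
      rw [hcomm s, add_sub_cancel_right]
    have step : ι r * X ^ (i+1) = (ι r * X ^ i) * X := by rw [pow_succ, mul_assoc]
    rw [step, mulXpow D hD0 ι X hcomm i r, Finset.sum_mul]
    have h1 : ∀ k ∈ Finset.range (i+1),
        X ^ k * ι (e D i k r) * X
          = X ^ (k+1) * ι (e D i k r) - X ^ k * ι (D (e D i k r)) := by
      intro k _
      rw [mul_assoc, hswap, mul_sub, ← mul_assoc, ← pow_succ]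
    rw [Finset.sum_congr rfl h1, Finset.sum_sub_distrib]
    have hR : ∑ k ∈ Finset.range (i+2), X ^ k * ι (e D (i+1) k r)
        = ∑ k ∈ Finset.range (i+1), X ^ (k+1) * ι (e D i k r - D (e D i (k+1) r))
          + X ^ 0 * ι (- D (e D i 0 r)) := by
      rw [Finset.sum_range_succ']
      rfl
    rw [hR]
    have hL : ∑ k ∈ Finset.range (i+1), X ^ k * ι (D (e D i k r))
        = ∑ k ∈ Finset.range (i+1), X ^ (k+1) * ι (D (e D i (k+1) r))
          + X ^ 0 * ι (D (e D i 0 r)) := by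
      have htop : X ^ (i+1) * ι (D (e D i (i+1) r)) = 0 := by
        rw [e_of_gt D hD0 i (i+1) r (by omega), hD0, map_zero, mul_zero]
      have h2 : ∑ k ∈ Finset.range (i+2), X ^ k * ι (D (e D i k r))
          = ∑ k ∈ Finset.range (i+1), X ^ k * ι (D (e D i k r)) := by
        rw [Finset.sum_range_succ, htop, add_zero]
      rw [← h2, Finset.sum_range_succ']
    rw [hL]
    simp only [map_sub, mul_sub, map_neg, mul_neg, Finset.sum_sub_distrib]
    abel

lemma coeff_zero (ι : R →+* A) (X : A)
    (hfree : ∀ c : ℕ →₀ R, (c.sum fun i a => X ^ i * ι a) = 0 → c = 0)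
    (M : ℕ) (c : ℕ → R)
    (h : ∑ i ∈ Finset.range M, X ^ i * ι (c i) = 0) : ∀ i < M, c i = 0 := by
  intro i hi
  set c' : ℕ →₀ R := Finsupp.onFinset (Finset.range M) (fun i => if i < M then c i else 0)
    (by intro j hj; simp only [Finset.mem_range]; by_contra hjM; simp [hjM] at hj) with hc'
  have hsum : (c'.sum fun i a => X ^ i * ι a) = 0 := by
    rw [hc', Finsupp.onFinset_sum (g := fun i a => X ^ i * ι a) _
      (by intro j; simp)]
    rw [← h]
    apply Finset.sum_congr rfl
    intro j hj
    rw [if_pos (Finset.mem_range.mp hj)]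
  have := hfree c' hsum
  have hc'i : c' i = 0 := by rw [this]; rfl
  rw [hc', Finsupp.onFinset_apply, if_pos hi] at hc'i
  exact hc'i

end Statement10Aux

/-- Let `R` be a ring, `D` a derivation of `R`, and `N` the upper
nilradical of `R` (a nil two-sided ideal containing every nil two-sided ideal of `R`).
In the differential polynomial ring `A = R[x;D]` (axiomatized by the ring embedding
`ι : R →+* A`, the element `X`, the commutation rule `X * ι a = ι a * X + ι (D a)`, and
the fact that every element of `A` is uniquely of the form `Σ_i X^i * ι aᵢ`), let `a ∈ R`
be central modulo `N` and suppose `f = Σ_{i=1}^{n} xⁱ bᵢ` satisfies the quasi-regularity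
equations `f + x·a − f·(x·a) = 0` and `f + x·a − (x·a)·f = 0`.  Then
`b_{n−j+1}·aʲ ∈ N` for every `j = 1,…,n`, and moreover `a^{n+1} ∈ N`. -/
theorem coefficients_mul_pow_mem_upperNilradical_of_quasiRegular
    {R A : Type*} [Ring R] [Ring A]
    (D : R → R)
    (hD_add : ∀ a b : R, D (a + b) = D a + D b)
    (hD_mul : ∀ a b : R, D (a * b) = D a * b + a * D b)
    (N : TwoSidedIdeal R)
    (hN_nil : ∀ x ∈ N, IsNilpotent x)
    (hN_max : ∀ I : TwoSidedIdeal R, (∀ x ∈ I, IsNilpotent x) → I ≤ N)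
    (ι : R →+* A) (X : A)
    (hcomm : ∀ a : R, X * ι a = ι a * X + ι (D a))
    (hspan : ∀ f : A, ∃ c : ℕ →₀ R, f = c.sum fun i a => X ^ i * ι a)
    (hfree : ∀ c : ℕ →₀ R, (c.sum fun i a => X ^ i * ι a) = 0 → c = 0)
    (a : R)
    (hcentral : ∀ r : R, a * r - r * a ∈ N)
    (n : ℕ) (b : ℕ → R)
    (f : A)
    (hf : f = ∑ i ∈ Finset.Icc 1 n, X ^ i * ι (b i))
    (hqr₁ : f + X * ι a - f * (X * ι a) = 0)
    (hqr₂ : f + X * ι a - (X * ι a) * f = 0) :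
    (∀ j : ℕ, 1 ≤ j → j ≤ n → b (n - j + 1) * a ^ j ∈ N) ∧
    a ^ (n + 1) ∈ N := by
  classical
  have hD0 : D 0 = 0 := by
    have h := hD_add 0 0
    rw [add_zero] at h
    nth_rewrite 1 [← add_zero (D 0)] at h
    exact (add_left_cancel h).symm
  -- powers of a are central modulo N
  have hcen : ∀ (j : ℕ) (r : R), a ^ j * r - r * a ^ j ∈ N := by
    intro j
    induction j with
    | zero => intro r; simpa using N.zero_mem
    | succ j ih =>
      intro r
      have h1 : a ^ (j+1) * r - r * a ^ (j+1)
          = a * (a ^ j * r - r * a ^ j) + (a * (r * a ^ j) - (r * a ^ j) * a) := by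
        nth_rewrite 1 [pow_succ']
        nth_rewrite 1 [pow_succ]
        noncomm_ring
      rw [h1]
      exact add_mem (N.mul_mem_left _ _ (ih r)) (hcentral _)
  -- coefficient relations from hqr₂
  have hcoe : ∀ m, m < n + 2 →
      ((if 1 ≤ m ∧ m ≤ n then b m else 0) + (if m = 1 then a else 0)
        - ∑ i ∈ Finset.Icc 1 n,
            (if 1 ≤ m ∧ m ≤ i + 1 then Statement10Aux.e D i (m-1) a * b i else 0)) = 0 := by
    apply Statement10Aux.coeff_zero ι X hfree (n+2)
    have e1 : (∑ m ∈ Finset.range (n+2), X ^ m * ι (if 1 ≤ m ∧ m ≤ n then b m else 0)) = f := by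
      rw [hf]
      have hsub : Finset.Icc 1 n ⊆ Finset.range (n+2) := by
        intro x hx; rw [Finset.mem_Icc] at hx; rw [Finset.mem_range]; omega
      have hzero : ∀ x ∈ Finset.range (n+2), x ∉ Finset.Icc 1 n →
          X ^ x * ι (if 1 ≤ x ∧ x ≤ n then b x else 0) = 0 := by
        intro x _ hx
        rw [Finset.mem_Icc] at hx
        rw [if_neg hx, map_zero, mul_zero]
      rw [← Finset.sum_subset hsub hzero]
      apply Finset.sum_congr rfl
      intro i hi
      rw [Finset.mem_Icc] at hi
      rw [if_pos hi]
    have e2 : (∑ m ∈ Finset.range (n+2), X ^ m * ι (if m = 1 then a else 0)) = X * ι a := by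
      rw [Finset.sum_eq_single_of_mem 1 (by rw [Finset.mem_range]; omega)
        (fun j _ hj => by rw [if_neg hj, map_zero, mul_zero])]
      rw [if_pos rfl, pow_one]
    have e3 : (∑ m ∈ Finset.range (n+2), X ^ m * ι (∑ i ∈ Finset.Icc 1 n,
          if 1 ≤ m ∧ m ≤ i + 1 then Statement10Aux.e D i (m-1) a * b i else 0))
        = (X * ι a) * f := by
      rw [hf, Finset.mul_sum]
      have key : ∀ i ∈ Finset.Icc 1 n, (X * ι a) * (X ^ i * ι (b i))
          = ∑ m ∈ Finset.range (n+2),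
              (if 1 ≤ m ∧ m ≤ i + 1 then X ^ m * ι (Statement10Aux.e D i (m-1) a * b i)
               else 0) := by
        intro i hi
        rw [Finset.mem_Icc] at hi
        have h1 : (X * ι a) * (X ^ i * ι (b i)) = X * (ι a * X ^ i) * ι (b i) := by
          rw [mul_assoc, mul_assoc, mul_assoc]
        rw [h1, Statement10Aux.mulXpow D hD0 ι X hcomm i a, Finset.mul_sum, Finset.sum_mul]
        have h2 : ∀ k ∈ Finset.range (i+1),
            X * (X ^ k * ι (Statement10Aux.e D i k a)) * ι (b i)
              = X ^ (k+1) * ι (Statement10Aux.e D i k a * b i) := by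
          intro k _
          rw [map_mul, ← mul_assoc, ← mul_assoc, ← pow_succ']
        rw [Finset.sum_congr rfl h2]
        rw [Finset.sum_filter (s := Finset.range (n+2))
          (p := fun m => 1 ≤ m ∧ m ≤ i + 1)
          (f := fun m => X ^ m * ι (Statement10Aux.e D i (m-1) a * b i)) |>.symm]
        have hfil : (Finset.range (n+2)).filter (fun m => 1 ≤ m ∧ m ≤ i + 1)
            = Finset.Icc 1 (i+1) := by
          ext x
          simp only [Finset.mem_filter, Finset.mem_range, Finset.mem_Icc]
          omega
        rw [hfil, ← Finset.Ico_add_one_right_eq_Icc, Finset.sum_Ico_eq_sum_range]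
        have hrange : i + 1 + 1 - 1 = i + 1 := by omega
        rw [hrange]
        apply Finset.sum_congr rfl
        intro k _
        have h3 : 1 + k = k + 1 := by omega
        rw [h3, Nat.add_sub_cancel]
      rw [Finset.sum_congr rfl key, Finset.sum_comm]
      apply Finset.sum_congr rfl
      intro m _
      rw [map_sum, Finset.mul_sum]
      apply Finset.sum_congr rfl
      intro i _
      by_cases hc : 1 ≤ m ∧ m ≤ i + 1
      · rw [if_pos hc, if_pos hc]
      · rw [if_neg hc, if_neg hc, map_zero, mul_zero]
    have expand : ∑ m ∈ Finset.range (n+2),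
        X ^ m * ι ((if 1 ≤ m ∧ m ≤ n then b m else 0) + (if m = 1 then a else 0)
          - ∑ i ∈ Finset.Icc 1 n,
              (if 1 ≤ m ∧ m ≤ i + 1 then Statement10Aux.e D i (m-1) a * b i else 0))
        = (∑ m ∈ Finset.range (n+2), X ^ m * ι (if 1 ≤ m ∧ m ≤ n then b m else 0))
          + (∑ m ∈ Finset.range (n+2), X ^ m * ι (if m = 1 then a else 0))
          - (∑ m ∈ Finset.range (n+2), X ^ m * ι (∑ i ∈ Finset.Icc 1 n,
              if 1 ≤ m ∧ m ≤ i + 1 then Statement10Aux.e D i (m-1) a * b i else 0)) := by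
      simp only [map_add, map_sub, mul_add, mul_sub, Finset.sum_add_distrib,
        Finset.sum_sub_distrib]
    rw [expand, e1, e2, e3]
    exact hqr₂
  -- the clean relations
  have hrel : ∀ m, 1 ≤ m → m ≤ n + 1 →
      (if m ≤ n then b m else 0) + (if m = 1 then a else 0)
        = (if 2 ≤ m then a * b (m-1) else 0)
          + ∑ i ∈ Finset.Icc m n, Statement10Aux.e D i (m-1) a * b i := by
    intro m hm1 hm2
    have h := hcoe m (by omega)
    rw [sub_eq_zero] at h
    simp only [eq_true hm1, true_and] at h
    rw [Finset.sum_filter (s := Finset.Icc 1 n) (p := fun i => m ≤ i + 1)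
      (f := fun i => Statement10Aux.e D i (m-1) a * b i) |>.symm] at h
    by_cases hm : 2 ≤ m
    · have hfil : (Finset.Icc 1 n).filter (fun i => m ≤ i + 1) = Finset.Icc (m-1) n := by
        ext x
        simp only [Finset.mem_filter, Finset.mem_Icc]
        omega
      rw [hfil] at h
      by_cases hmn : m - 1 ≤ n
      · have hins : Finset.Icc (m-1) n = insert (m-1) (Finset.Icc m n) := by
          ext x
          simp only [Finset.mem_insert, Finset.mem_Icc]
          omega
        rw [hins, Finset.sum_insert (by rw [Finset.mem_Icc]; omega)] at h
        rw [Statement10Aux.e_top D hD0] at h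
        rw [h, if_pos hm]
      · -- m = n + 1 and n = 0 case: m - 1 > n means m > n + 1, impossible
        omega
    · -- m = 1
      have hm1' : m = 1 := by omega
      subst hm1'
      have hfil : (Finset.Icc 1 n).filter (fun i => 1 ≤ i + 1) = Finset.Icc 1 n := by
        ext x
        simp only [Finset.mem_filter, Finset.mem_Icc]
        omega
      rw [hfil] at h
      rw [h, if_neg (by omega), zero_add]
  -- main induction
  have hT : ∀ j : ℕ, j ≤ n + 1 → ∀ i, 1 ≤ i → n + 1 - j ≤ i → i ≤ n → a ^ j * b i ∈ N := by
    intro j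
    induction j with
    | zero => intro _ i _ hi1 hi2; exact absurd hi2 (by omega)
    | succ j ih =>
      intro hj i hi0 hi1 hi2
      by_cases hcase : n + 1 - j ≤ i
      · have h1 : a ^ (j+1) * b i = a * (a ^ j * b i) := by rw [pow_succ', mul_assoc]
        rw [h1]
        exact N.mul_mem_left _ _ (ih (by omega) i hi0 hcase hi2)
      · have him : i = n - j := by omega
        have hm2 : 2 ≤ i + 1 := by omega
        have h := hrel (i+1) (by omega) (by omega)
        rw [if_pos hm2, if_neg (by omega : ¬ i + 1 = 1), add_zero] at h
        simp only [Nat.add_sub_cancel] at h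
        -- h : (if i+1 ≤ n then b (i+1) else 0) = a * b i + ∑ i' ∈ Icc (i+1) n, e i' i a * b i'
        have hrw : a ^ (j+1) * b i
            = a ^ j * (if i + 1 ≤ n then b (i+1) else 0)
              - ∑ i' ∈ Finset.Icc (i+1) n, a ^ j * (Statement10Aux.e D i' i a * b i') := by
          rw [← Finset.mul_sum, ← mul_sub]
          rw [show (if i + 1 ≤ n then b (i+1) else 0)
              - ∑ i' ∈ Finset.Icc (i+1) n, Statement10Aux.e D i' i a * b i' = a * b i by
            rw [h, add_sub_cancel_right]]
          rw [pow_succ, mul_assoc]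
        rw [hrw]
        apply sub_mem
        · split
          · exact ih (by omega) (i+1) (by omega) (by omega) (by omega)
          · rw [mul_zero]; exact N.zero_mem
        · apply sum_mem
          intro i' hi'
          rw [Finset.mem_Icc] at hi'
          have hsplit : a ^ j * (Statement10Aux.e D i' i a * b i')
              = (a ^ j * Statement10Aux.e D i' i a - Statement10Aux.e D i' i a * a ^ j) * b i'
                + Statement10Aux.e D i' i a * (a ^ j * b i') := by noncomm_ring
          rw [hsplit]
          apply add_mem
          · exact N.mul_mem_right _ _ (hcen j _)
          · exact N.mul_mem_left _ _ (ih (by omega) i' (by omega) (by omega) (by omega))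
  constructor
  · intro j hj1 hj2
    have hi : n - j + 1 = n + 1 - j := by omega
    have h1 : a ^ j * b (n - j + 1) ∈ N := by
      apply hT j (by omega) (n - j + 1) (by omega) (by omega) (by omega)
    have h2 := hcen j (b (n - j + 1))
    have h3 : b (n - j + 1) * a ^ j = a ^ j * b (n - j + 1)
        - (a ^ j * b (n - j + 1) - b (n - j + 1) * a ^ j) := (sub_sub_cancel _ _).symm
    rw [h3]
    exact sub_mem h1 h2
  · have h := hrel 1 le_rfl (by omega)
    rw [if_neg (by omega : ¬ 2 ≤ 1), zero_add, if_pos rfl] at h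
    -- h : (if 1 ≤ n then b 1 else 0) + a = ∑ i ∈ Icc 1 n, e i 0 a * b i
    have hrw : a ^ (n+1)
        = (∑ i ∈ Finset.Icc 1 n, a ^ n * (Statement10Aux.e D i 0 a * b i))
          - a ^ n * (if 1 ≤ n then b 1 else 0) := by
      rw [← Finset.mul_sum, ← h, pow_succ, mul_add]
      abel
    rw [hrw]
    apply sub_mem
    · apply sum_mem
      intro i hi
      rw [Finset.mem_Icc] at hi
      have hsplit : a ^ n * (Statement10Aux.e D i 0 a * b i)
          = (a ^ n * Statement10Aux.e D i 0 a - Statement10Aux.e D i 0 a * a ^ n) * b i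
            + Statement10Aux.e D i 0 a * (a ^ n * b i) := by noncomm_ring
      rw [hsplit]
      apply add_mem
      · exact N.mul_mem_right _ _ (hcen n _)
      · exact N.mul_mem_left _ _ (hT n (by omega) i (by omega) (by omega) (by omega))
    · split
      · next h1n =>
        exact hT n (by omega) 1 le_rfl (by omega) h1n
      · rw [mul_zero]; exact N.zero_mem
end
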